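/- arXiv:1312.6537 — 5 statements merged into one kernel-verified Lean document; each statement's English description precedes it below -/
import Mathlib

section
/- For all natural numbers n ≥ 1, the finite Van Hamme identity holds: ∑_{k=1}^{n} (-1)^{k-1} [n choose k]_q · q^{k(k+1)/2} / (1 - q^k) = ∑_{k=1}^{n} q^k / (1 - q^k), as an identity of rational functions in q (valid for all q with q^k ≠ 1 for 1 ≤ k ≤ n). -/
/-- The q-Pochhammer symbol `(a;q)_n = ∏_{j=0}^{n-1} (1 - a q^j)`. -/
noncomputable def qPoch (a q : ℂ) (n : ℕ) : ℂ := ∏ j ∈ Finset.range n, (1 - a * q ^ j)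

/-- The Gaussian binomial coefficient `[n choose k]_q`. -/
noncomputable def qBinom (q : ℂ) (n k : ℕ) : ℂ :=
  qPoch q q n / (qPoch q q k * qPoch q q (n - k))

/-!
Write `S n` for the left-hand side. The q-Pascal rule `[n+1, k] = [n, k] + q^(n+1-k) [n, k-1]`
and the absorption identity `[n, k-1] / (1 - q^k) = [n+1, k] / (1 - q^(n+1))` give
`S (n+1) - S n = -q^(n+1) / (1 - q^(n+1)) * ∑_{k ≥ 1} (-1)^k [n+1, k] q^(k(k-1)/2)`.
The q-binomial theorem `(x; q)_m = ∑_k (-1)^k [m, k] q^(k(k-1)/2) x^k` at `x = 1` makes the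
full alternating sum vanish, so the sum over `k ≥ 1` is `-1` and
`S (n+1) - S n = q^(n+1) / (1 - q^(n+1))`.
-/

open Finset

lemma Nat.mul_succ_div_two (k : ℕ) : k * (k + 1) / 2 = (k + 1).choose 2 := by
  rw [Nat.choose_two_right, Nat.add_sub_cancel, mul_comm]

lemma Nat.choose_two_succ (k : ℕ) : (k + 1).choose 2 = k.choose 2 + k := by
  rw [Nat.choose_succ_succ', Nat.choose_one_right, add_comm]

lemma qPoch_zero (a q : ℂ) : qPoch a q 0 = 1 := rfl

lemma qPoch_succ (a q : ℂ) (n : ℕ) : qPoch a q (n + 1) = qPoch a q n * (1 - a * q ^ n) :=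
  prod_range_succ _ _

lemma qPoch_self_succ (q : ℂ) (n : ℕ) : qPoch q q (n + 1) = qPoch q q n * (1 - q ^ (n + 1)) := by
  rw [qPoch_succ, pow_succ']

lemma qPoch_one_succ (q : ℂ) (n : ℕ) : qPoch 1 q (n + 1) = 0 :=
  prod_eq_zero (mem_range.2 n.succ_pos) (by simp)

lemma qPoch_self_ne_zero_iff {q : ℂ} {n : ℕ} :
    qPoch q q n ≠ 0 ↔ ∀ k, 1 ≤ k → k ≤ n → q ^ k ≠ 1 := by
  simp only [qPoch, ne_eq, prod_eq_zero_iff, mem_range, not_exists, not_and, ← pow_succ',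
    sub_eq_zero, eq_comm (a := (1 : ℂ))]
  exact ⟨fun h k hk hkn => by simpa [Nat.sub_add_cancel hk] using h (k - 1) (by omega),
    fun h j hj => h (j + 1) j.succ_pos hj⟩

lemma one_sub_pow_ne_zero {q : ℂ} {n k : ℕ} (h : qPoch q q n ≠ 0) (hk : 1 ≤ k) (hkn : k ≤ n) :
    1 - q ^ k ≠ 0 :=
  sub_ne_zero.2 (qPoch_self_ne_zero_iff.1 h k hk hkn).symm

lemma qPoch_self_ne_zero_of_le {q : ℂ} {m n : ℕ} (h : qPoch q q n ≠ 0) (hmn : m ≤ n) :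
    qPoch q q m ≠ 0 :=
  qPoch_self_ne_zero_iff.2 fun k hk hkm => qPoch_self_ne_zero_iff.1 h k hk (hkm.trans hmn)

lemma qBinom_zero {q : ℂ} {n : ℕ} (h : qPoch q q n ≠ 0) : qBinom q n 0 = 1 := by
  rw [qBinom, Nat.sub_zero, qPoch_zero, one_mul, div_self h]

lemma qBinom_self {q : ℂ} {n : ℕ} (h : qPoch q q n ≠ 0) : qBinom q n n = 1 := by
  rw [qBinom, Nat.sub_self, qPoch_zero, mul_one, div_self h]

-- Needs `k < n`: truncated subtraction gives `qBinom q n (n + 1) = 1 / (1 - q ^ (n + 1))`, not `0`.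
lemma qBinom_succ_succ {q : ℂ} {n k : ℕ} (h : qPoch q q n ≠ 0) (hk : k < n) :
    qBinom q (n + 1) (k + 1) = qBinom q n (k + 1) + q ^ (n - k) * qBinom q n k := by
  obtain ⟨d, rfl⟩ : ∃ d, n = k + d + 1 := ⟨n - k - 1, by omega⟩
  have hk1 := one_sub_pow_ne_zero h (k := k + 1) (by omega) (by omega)
  have hd1 := one_sub_pow_ne_zero h (k := d + 1) (by omega) (by omega)
  simp only [qBinom, show k + d + 1 + 1 - (k + 1) = d + 1 by omega,
    show k + d + 1 - (k + 1) = d by omega, show k + d + 1 - k = d + 1 by omega, qPoch_self_succ]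
  field_simp
  ring

lemma qBinom_succ_succ_mul_one_sub_pow {q : ℂ} (n k : ℕ) (h : 1 - q ^ (k + 1) ≠ 0) :
    qBinom q (n + 1) (k + 1) * (1 - q ^ (k + 1)) = qBinom q n k * (1 - q ^ (n + 1)) := by
  simp only [qBinom, Nat.add_sub_add_right, qPoch_self_succ]
  field_simp

theorem qPoch_eq_sum_qBinom {q : ℂ} {n : ℕ} (h : qPoch q q n ≠ 0) (x : ℂ) :
    qPoch x q n = ∑ k ∈ range (n + 1), (-1) ^ k * qBinom q n k * q ^ k.choose 2 * x ^ k := by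
  symm
  induction n with
  | zero => simp [qBinom, qPoch]
  | succ n ih =>
    have hn := qPoch_self_ne_zero_of_le h n.le_succ
    set t : ℕ → ℂ := fun k => (-1) ^ k * qBinom q n k * q ^ k.choose 2 * x ^ k
    have hmid : ∀ k ∈ range n, (-1) ^ (k + 1) * qBinom q (n + 1) (k + 1) * q ^ (k + 1).choose 2 *
        x ^ (k + 1) = t (k + 1) - x * q ^ n * t k := by
      intro k hk
      have hqn : q ^ n = q ^ (n - k) * q ^ k := by
        rw [← pow_add, Nat.sub_add_cancel (mem_range.1 hk).le]
      simp only [t, qBinom_succ_succ hn (mem_range.1 hk), Nat.choose_two_succ, hqn]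
      ring
    have htop : (-1) ^ (n + 1) * qBinom q (n + 1) (n + 1) * q ^ (n + 1).choose 2 * x ^ (n + 1) =
        -x * q ^ n * t n := by
      simp only [t, qBinom_self h, qBinom_self hn, Nat.choose_two_succ]
      ring
    have hbottom : (-1) ^ 0 * qBinom q (n + 1) 0 * q ^ (0 : ℕ).choose 2 * x ^ 0 = t 0 := by
      simp [t, qBinom_zero h, qBinom_zero hn]
    rw [sum_range_succ', sum_range_succ, sum_congr rfl hmid, htop, hbottom, sum_sub_distrib,
      ← mul_sum, qPoch_succ, ← ih hn]
    linear_combination (x * q ^ n) * sum_range_succ t n - sum_range_succ' t n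

lemma sum_range_alternating_qBinom {q : ℂ} {n : ℕ} (h : qPoch q q (n + 1) ≠ 0) :
    ∑ j ∈ range (n + 1), (-1) ^ (j + 1) * qBinom q (n + 1) (j + 1) * q ^ (j + 1).choose 2 = -1 := by
  have := qPoch_eq_sum_qBinom h 1
  rw [qPoch_one_succ, sum_range_succ', eq_comm] at this
  simpa [qBinom_zero h, add_eq_zero_iff_eq_neg] using this

theorem vanHamme {q : ℂ} {n : ℕ} (h : qPoch q q n ≠ 0) :
    ∑ j ∈ range n, (-1) ^ j * qBinom q n (j + 1) * q ^ (j + 2).choose 2 / (1 - q ^ (j + 1)) =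
      ∑ j ∈ range n, q ^ (j + 1) / (1 - q ^ (j + 1)) := by
  induction n with
  | zero => simp
  | succ n ih =>
    have hn := qPoch_self_ne_zero_of_le h n.le_succ
    have hn1 := one_sub_pow_ne_zero h (k := n + 1) n.succ_pos le_rfl
    set t : ℕ → ℂ := fun k => (-1) ^ k * qBinom q (n + 1) k * q ^ k.choose 2
    set c := q ^ (n + 1) / (1 - q ^ (n + 1))
    have hmid : ∀ j ∈ range n, (-1) ^ j * qBinom q (n + 1) (j + 1) * q ^ (j + 2).choose 2 /
        (1 - q ^ (j + 1)) = (-1) ^ j * qBinom q n (j + 1) * q ^ (j + 2).choose 2 /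
        (1 - q ^ (j + 1)) - c * t (j + 1) := by
      intro j hj
      have hj := mem_range.1 hj
      have hj1 := one_sub_pow_ne_zero h (k := j + 1) j.succ_pos (by omega)
      have habs := qBinom_succ_succ_mul_one_sub_pow n j hj1
      rw [qBinom_succ_succ hn hj]
      obtain ⟨d, rfl⟩ : ∃ d, n = j + d := ⟨n - j, by omega⟩
      simp only [t, c, Nat.choose_two_succ, Nat.add_sub_cancel_left]
      field_simp
      linear_combination (-1) ^ (j + 1) * q ^ (j + d + 1) * q ^ (j.choose 2 + j) * habs
    have htop : (-1) ^ n * qBinom q (n + 1) (n + 1) * q ^ (n + 2).choose 2 / (1 - q ^ (n + 1)) =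
        -c * t (n + 1) := by
      simp only [t, c, qBinom_self h, Nat.choose_two_succ]
      field_simp
      ring
    have halt : ∑ j ∈ range (n + 1), t (j + 1) = -1 := sum_range_alternating_qBinom h
    rw [sum_range_succ, sum_congr rfl hmid, htop, sum_sub_distrib, ih hn, ← mul_sum,
      sum_range_succ _ n]
    rw [sum_range_succ] at halt
    linear_combination (-c) * halt

theorem stmt0_general (n : ℕ) (q : ℂ)
    (hq : ∀ k, 1 ≤ k → k ≤ n → q ^ k ≠ 1) :
    ∑ k ∈ Finset.Icc 1 n,
        (-1 : ℂ) ^ (k - 1) * qBinom q n k * q ^ (k * (k + 1) / 2) / (1 - q ^ k)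
      = ∑ k ∈ Finset.Icc 1 n, q ^ k / (1 - q ^ k) := by
  have sum_Icc (f : ℕ → ℂ) : ∑ k ∈ Icc 1 n, f k = ∑ j ∈ range n, f (j + 1) := by
    rw [range_eq_Ico, sum_Ico_add']
    rfl
  simp only [sum_Icc, Nat.add_sub_cancel, Nat.mul_succ_div_two]
  exact vanHamme (qPoch_self_ne_zero_iff.2 hq)

/-- Van Hamme's identity. -/
theorem stmt0 (n : ℕ) (hn : 1 ≤ n) (q : ℂ)
    (hq : ∀ k, 1 ≤ k → k ≤ n → q ^ k ≠ 1) :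
    ∑ k ∈ Finset.Icc 1 n,
        (-1 : ℂ) ^ (k - 1) * qBinom q n k * q ^ (k * (k + 1) / 2) / (1 - q ^ k)
      = ∑ k ∈ Finset.Icc 1 n, q ^ k / (1 - q ^ k) :=
  stmt0_general n q hq
end

section
/- For natural numbers m, n ≥ 0 and 0 ≤ r ≤ m, and q with 0 < |q| < 1 (or as formal identity with q generic): ∑_{k=1}^{m} (-1)^k q^{k(k+1)/2 - rk} / ((q;q)_k (q;q)_{m-k} (q^k; q)_{n+1}') − ∑_{k=1}^{n} (-1)^k q^{k(k+1)/2 + rk} / ((q;q)_k (q;q)_{n-k} (q^k; q)_{m+1}') = (1/((q;q)_m (q;q)_n)) · ( −r + ∑_{k=1}^{n} q^k/(1−q^k) − ∑_{k=1}^{m} q^k/(1−q^k) ), where in each product (q^k; q)_{N}' all factors are taken; here p = q in the bibasic identity, i.e., the special case p = q of the identity obtained by letting x → 1. -/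
/-!
Multiplied by `(q;q)_m (q;q)_n`, each summand becomes `(-1)^k q^(k(k+1)/2 ∓ rk) / (1 - q^k)` times a
ratio of Gaussian binomials `[m+n, n+k] / [m+n, n]` (or `[m+n, m+k] / [m+n, m]`). Raising `r` by one
changes this sum by the q-binomial sum `∑ (-1)^i q^(i(i+1)/2) [m+n, i] z^i` at `z = q^(-(n+r+1))`,
normalised by its `i = n` term; since the sum equals `(zq;q)_{m+n}`, which has the factor
`1 - z q^(n+r+1) = 0`, every step subtracts exactly `1`. The same vanishing sum at `r = 0` shows
that raising `m` by one subtracts `q^(m+1)/(1-q^(m+1))`, and the sum is antisymmetric in `m, n`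
at `r = 0`.
-/

open Finset

namespace QBibasic

def tri (k : ℕ) : ℕ := k * (k + 1) / 2

lemma two_mul_tri (k : ℕ) : 2 * tri k = k * (k + 1) :=
  Nat.mul_div_cancel' (Nat.even_mul_succ_self k).two_dvd

lemma tri_add (a b : ℕ) : tri (a + b) = tri a + tri b + a * b :=
  Nat.eq_of_mul_eq_mul_left two_pos <| by
    rw [mul_add, mul_add, two_mul_tri, two_mul_tri, two_mul_tri]; ring

lemma tri_succ (k : ℕ) : tri (k + 1) = tri k + (k + 1) := by
  rw [tri_add, show tri 1 = 1 from rfl, mul_one, add_assoc, add_comm 1]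

lemma sum_Icc_one_eq_sum_range {M : Type*} [AddCommMonoid M] (f : ℕ → M) (n : ℕ) :
    ∑ k ∈ Icc 1 n, f k = ∑ k ∈ range n, f (k + 1) := by
  induction n with
  | zero => simp
  | succ n ih => rw [sum_Icc_succ_top (by omega), ih, sum_range_succ]

lemma sum_antidiagonal_add {M : Type*} [AddCommMonoid M] (g : ℕ → ℕ → M) (a b : ℕ) :
    ∑ p ∈ antidiagonal (a + b), g p.1 p.2
      = g b a + ∑ k ∈ Icc 1 a, g (b + k) (a - k) + ∑ k ∈ Icc 1 b, g (b - k) (a + k) := by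
  rw [Nat.sum_antidiagonal_eq_sum_range_succ, Nat.succ_eq_add_one,
    show a + b + 1 = b + (a + 1) by omega, sum_range_add, sum_range_succ',
    ← sum_range_reflect, sum_Icc_one_eq_sum_range, sum_Icc_one_eq_sum_range]
  have hup : ∀ k ∈ range a,
      g (b + (k + 1)) (a + b - (b + (k + 1))) = g (b + (k + 1)) (a - (k + 1)) :=
    fun k _ => by rw [show a + b - (b + (k + 1)) = a - (k + 1) by omega]
  have hdown : ∀ k ∈ range b,
      g (b - 1 - k) (a + b - (b - 1 - k)) = g (b - (k + 1)) (a + (k + 1)) :=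
    fun k hk => by
      have := mem_range.mp hk
      rw [show b - 1 - k = b - (k + 1) by omega, show a + b - (b - (k + 1)) = a + (k + 1) by omega]
  rw [sum_congr rfl hup, sum_congr rfl hdown, add_zero, Nat.add_sub_cancel]
  abel

lemma qPoch_succ (a q : ℂ) (n : ℕ) : qPoch a q (n + 1) = qPoch a q n * (1 - a * q ^ n) :=
  prod_range_succ _ _

lemma qPoch_add (a q : ℂ) (m n : ℕ) :
    qPoch a q (m + n) = qPoch a q m * qPoch (a * q ^ m) q n := by
  simp only [qPoch, prod_range_add, pow_add, mul_assoc]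

lemma qPoch_self_succ (q : ℂ) (n : ℕ) : qPoch q q (n + 1) = qPoch q q n * (1 - q ^ (n + 1)) := by
  rw [qPoch_succ, ← pow_succ']

variable {q : ℂ}

lemma one_sub_pow_ne_zero (hq1 : ∀ j, 1 ≤ j → q ^ j ≠ 1) {j : ℕ} (hj : 1 ≤ j) : 1 - q ^ j ≠ 0 :=
  sub_ne_zero_of_ne (hq1 j hj).symm

lemma qPoch_self_ne_zero (hq1 : ∀ j, 1 ≤ j → q ^ j ≠ 1) (n : ℕ) : qPoch q q n ≠ 0 :=
  prod_ne_zero_iff.mpr fun j _ => by rw [← pow_succ']; exact one_sub_pow_ne_zero hq1 (by omega)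

lemma qPoch_self_mul_qPoch_pow (q : ℂ) (k n : ℕ) :
    qPoch q q (k + 1) * qPoch (q ^ (k + 1)) q (n + 1)
      = (1 - q ^ (k + 1)) * qPoch q q (k + 1 + n) := by
  have hone : qPoch (q ^ (k + 1)) q 1 = 1 - q ^ (k + 1) := by simp [qPoch]
  rw [qPoch_add q q (k + 1) n, add_comm n 1, qPoch_add (q ^ (k + 1)) q 1 n, hone, pow_one,
    ← pow_succ, ← pow_succ']
  ring

theorem sum_antidiagonal_qBinomial (hq1 : ∀ j, 1 ≤ j → q ^ j ≠ 1) (z : ℂ) (N : ℕ) :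
    ∑ p ∈ antidiagonal N, (-1) ^ p.1 * q ^ tri p.1 * z ^ p.1 / (qPoch q q p.1 * qPoch q q p.2)
      = qPoch (z * q) q N / qPoch q q N := by
  set c : ℕ → ℕ → ℂ := fun i j => (-1) ^ i * q ^ tri i * z ^ i / (qPoch q q i * qPoch q q j)
  have hf := qPoch_self_ne_zero hq1
  have lower_right (i j : ℕ) : (1 - q ^ (j + 1)) * c i (j + 1) = c i j := by
    have := one_sub_pow_ne_zero hq1 (Nat.le_add_left 1 j)
    simp only [c, qPoch_self_succ]
    field_simp
  have lower_left (i j : ℕ) :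
      q ^ j * (1 - q ^ (i + 1)) * c (i + 1) j = -(z * q ^ (i + j + 1)) * c i j := by
    have := one_sub_pow_ne_zero hq1 (Nat.le_add_left 1 i)
    simp only [c, qPoch_self_succ, tri_succ]
    field_simp
    ring
  have recurrence (N : ℕ) : (1 - q ^ (N + 1)) * ∑ p ∈ antidiagonal (N + 1), c p.1 p.2
      = (1 - z * q ^ (N + 1)) * ∑ p ∈ antidiagonal N, c p.1 p.2 := by
    have hsplit : ∀ p ∈ antidiagonal (N + 1), (1 - q ^ (N + 1)) * c p.1 p.2
        = (1 - q ^ p.2) * c p.1 p.2 + q ^ p.2 * (1 - q ^ p.1) * c p.1 p.2 := by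
      intro p hp
      rw [← mem_antidiagonal.mp hp, pow_add]
      ring
    rw [mul_sum, sum_congr rfl hsplit, sum_add_distrib, Nat.sum_antidiagonal_succ',
      Nat.sum_antidiagonal_succ]
    simp only [pow_zero, sub_self, zero_mul, mul_zero, zero_add, lower_right, lower_left]
    rw [mul_sum, ← sum_add_distrib]
    refine sum_congr rfl fun p hp => ?_
    rw [mem_antidiagonal.mp hp]
    ring
  induction N with
  | zero => simp [qPoch, tri]
  | succ N ih =>
    have := one_sub_pow_ne_zero hq1 (Nat.le_add_left 1 N)
    rw [← mul_right_inj' this, recurrence, ih, qPoch_succ, qPoch_self_succ]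
    field_simp
    ring

/-- `[a+b, b+k]_q / [a+b, b]_q` for `k ≤ a`. -/
noncomputable def binomRatio (q : ℂ) (a b k : ℕ) : ℂ :=
  qPoch q q a * qPoch q q b / (qPoch q q (a - k) * qPoch q q (b + k))

noncomputable def qTerm (q : ℂ) (a b : ℕ) (e : ℤ) (k : ℕ) : ℂ :=
  (-1) ^ k * q ^ ((tri k : ℤ) + e * k) * binomRatio q a b k

theorem one_add_sum_qTerm_add_sum_qTerm (hq : q ≠ 0) (hq1 : ∀ j, 1 ≤ j → q ^ j ≠ 1) {a b : ℕ}
    {r : ℤ} (hbr : -(b : ℤ) ≤ r) (hra : r < a) :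
    1 + ∑ k ∈ Icc 1 a, qTerm q a b (-(r + 1)) k + ∑ k ∈ Icc 1 b, qTerm q b a r k = 0 := by
  -- `z` kills the factor `1 - z q^(b+r+1)` of `(zq;q)_{a+b}`; the summands of index `b ± k` of the
  -- q-binomial sum are `c b a` times the `qTerm`s.
  set z : ℂ := q ^ (-((b : ℤ) + r + 1))
  set c : ℕ → ℕ → ℂ := fun i j => (-1) ^ i * q ^ tri i * z ^ i / (qPoch q q i * qPoch q q j)
  have hf := qPoch_self_ne_zero hq1
  have hvanish : qPoch (z * q) q (a + b) = 0 := by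
    obtain ⟨j, hj⟩ : ∃ j : ℕ, (j : ℤ) = b + r := ⟨(b + r).toNat, Int.toNat_of_nonneg (by omega)⟩
    refine prod_eq_zero (i := j) (mem_range.mpr (by omega)) ?_
    rw [mul_assoc, ← pow_succ', ← zpow_natCast, ← zpow_add₀ hq,
      show -((b : ℤ) + r + 1) + ((j + 1 : ℕ) : ℤ) = 0 by push_cast; omega, zpow_zero, sub_self]
  have hz (i : ℕ) : q ^ tri i * z ^ i = q ^ ((tri i : ℤ) - (b + r + 1) * i) := by
    rw [← zpow_natCast, ← zpow_natCast, ← zpow_mul, ← zpow_add₀ hq]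
    congr 1
    ring
  have hup : ∀ k ∈ Icc 1 a, c (b + k) (a - k) = c b a * qTerm q a b (-(r + 1)) k := by
    intro k hk
    have hexp : q ^ tri (b + k) * z ^ (b + k)
        = q ^ tri b * z ^ b * q ^ ((tri k : ℤ) + -(r + 1) * k) := by
      rw [hz, hz, ← zpow_add₀ hq]
      congr 1
      push_cast [tri_add]
      ring
    calc c (b + k) (a - k)
        = (-1) ^ b * (-1) ^ k * (q ^ tri (b + k) * z ^ (b + k))
            / (qPoch q q (b + k) * qPoch q q (a - k)) := by
          simp only [c, pow_add]; ring
      _ = _ := by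
          rw [hexp]
          simp only [c, qTerm, binomRatio]
          field_simp [hf]
  have hdown : ∀ k ∈ Icc 1 b, c (b - k) (a + k) = c b a * qTerm q b a r k := by
    intro k hk
    obtain ⟨s, rfl⟩ : ∃ s, b = s + k := ⟨b - k, by have := (mem_Icc.mp hk).2; omega⟩
    have hexp : q ^ tri s * z ^ s
        = q ^ tri (s + k) * z ^ (s + k) * q ^ ((tri k : ℤ) + r * k) := by
      have h2 : 2 * (tri k : ℤ) = k * (k + 1) := by exact_mod_cast two_mul_tri k
      rw [hz, hz, ← zpow_add₀ hq]
      congr 1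
      push_cast [tri_add]
      linear_combination -h2
    have hsign : ((-1 : ℂ) ^ k) ^ 2 = 1 := by rw [← pow_mul, pow_mul', neg_one_sq, one_pow]
    calc c (s + k - k) (a + k)
        = (-1) ^ s * (q ^ tri s * z ^ s) / (qPoch q q s * qPoch q q (a + k)) := by
          simp only [c, Nat.add_sub_cancel]; ring
      _ = _ := by
          rw [hexp]
          simp only [c, qTerm, binomRatio, Nat.add_sub_cancel]
          rw [pow_add (-1 : ℂ) s k]
          field_simp [hf]
          linear_combination (-z ^ (s + k)) * hsign
  have hc : c b a ≠ 0 :=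
    div_ne_zero (by simp [hq, z, zpow_ne_zero]) (mul_ne_zero (hf b) (hf a))
  have hE := sum_antidiagonal_qBinomial hq1 z (a + b)
  rw [hvanish, zero_div, sum_antidiagonal_add c, sum_congr rfl hup, sum_congr rfl hdown,
    ← mul_sum, ← mul_sum] at hE
  exact (mul_eq_zero.mp (by linear_combination hE)).resolve_left hc

lemma binomRatio_succ_left (hq1 : ∀ j, 1 ≤ j → q ^ j ≠ 1) {a k : ℕ} (b : ℕ) (hk : k ≤ a) :
    (1 - q ^ (a + 1)) * binomRatio q a b k
      = (1 - q ^ (a + 1 - k)) * binomRatio q (a + 1) b k := by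
  have := one_sub_pow_ne_zero hq1 (Nat.le_add_left 1 (a - k))
  rw [binomRatio, binomRatio, show a + 1 - k = a - k + 1 by omega, qPoch_self_succ q (a - k),
    qPoch_self_succ q a]
  field_simp [qPoch_self_ne_zero hq1]

lemma binomRatio_succ_right (hq1 : ∀ j, 1 ≤ j → q ^ j ≠ 1) (a b k : ℕ) :
    (1 - q ^ (b + k + 1)) * binomRatio q a (b + 1) k
      = (1 - q ^ (b + 1)) * binomRatio q a b k := by
  have := one_sub_pow_ne_zero hq1 (Nat.le_add_left 1 (b + k))
  rw [binomRatio, binomRatio, show b + 1 + k = b + k + 1 by omega, qPoch_self_succ q (b + k),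
    qPoch_self_succ q b]
  field_simp [qPoch_self_ne_zero hq1]

lemma qTerm_add_one (hq : q ≠ 0) (a b : ℕ) (e : ℤ) (k : ℕ) :
    qTerm q a b (e + 1) k = q ^ k * qTerm q a b e k := by
  rw [qTerm, qTerm, show (tri k : ℤ) + (e + 1) * k = (tri k : ℤ) + e * k + k by ring,
    zpow_add₀ hq, zpow_natCast]
  ring

noncomputable def lambertSum (q : ℂ) (a : ℕ) : ℂ := ∑ k ∈ Icc 1 a, q ^ k / (1 - q ^ k)

/-- `(q;q)_a (q;q)_b` times the left-hand side of the identity (see `sum_div_qPoch`). -/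
noncomputable def bibasicSum (q : ℂ) (a b : ℕ) (r : ℤ) : ℂ :=
  ∑ k ∈ Icc 1 a, qTerm q a b (-r) k / (1 - q ^ k) - ∑ k ∈ Icc 1 b, qTerm q b a r k / (1 - q ^ k)

lemma sum_qTerm_add_one_div_sub (hq : q ≠ 0) (hq1 : ∀ j, 1 ≤ j → q ^ j ≠ 1) (a b : ℕ) (e : ℤ) :
    ∑ k ∈ Icc 1 a, qTerm q a b (e + 1) k / (1 - q ^ k)
      - ∑ k ∈ Icc 1 a, qTerm q a b e k / (1 - q ^ k) = -∑ k ∈ Icc 1 a, qTerm q a b e k := by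
  rw [← sum_sub_distrib, ← sum_neg_distrib]
  refine sum_congr rfl fun k hk => ?_
  have := one_sub_pow_ne_zero hq1 (mem_Icc.mp hk).1
  rw [qTerm_add_one hq]
  field_simp
  ring

lemma bibasicSum_add_one (hq : q ≠ 0) (hq1 : ∀ j, 1 ≤ j → q ^ j ≠ 1) {a b : ℕ} {r : ℤ}
    (hbr : -(b : ℤ) ≤ r) (hra : r < a) :
    bibasicSum q a b (r + 1) = bibasicSum q a b r - 1 := by
  have hleft := sum_qTerm_add_one_div_sub hq hq1 a b (-(r + 1))
  have hright := sum_qTerm_add_one_div_sub hq hq1 b a r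
  rw [show -(r + 1) + 1 = -r by ring] at hleft
  unfold bibasicSum
  linear_combination -hleft - hright + one_add_sum_qTerm_add_sum_qTerm hq hq1 hbr hra

lemma qTerm_succ_left (hq1 : ∀ j, 1 ≤ j → q ^ j ≠ 1) {a k : ℕ} (b : ℕ) (e : ℤ) (hk : k ≤ a) :
    (1 - q ^ (a + 1)) * qTerm q a b e k = (1 - q ^ (a + 1 - k)) * qTerm q (a + 1) b e k := by
  simp only [qTerm]
  linear_combination ((-1) ^ k * q ^ ((tri k : ℤ) + e * k)) * binomRatio_succ_left hq1 b hk

lemma qTerm_succ_right (hq1 : ∀ j, 1 ≤ j → q ^ j ≠ 1) (a b : ℕ) (e : ℤ) (k : ℕ) :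
    (1 - q ^ (b + k + 1)) * qTerm q a (b + 1) e k = (1 - q ^ (b + 1)) * qTerm q a b e k := by
  simp only [qTerm]
  linear_combination ((-1) ^ k * q ^ ((tri k : ℤ) + e * k)) * binomRatio_succ_right hq1 a b k

lemma bibasicSum_succ_left (hq : q ≠ 0) (hq1 : ∀ j, 1 ≤ j → q ^ j ≠ 1) (a b : ℕ) :
    bibasicSum q (a + 1) b 0 = bibasicSum q a b 0 - q ^ (a + 1) / (1 - q ^ (a + 1)) := by
  have ha := one_sub_pow_ne_zero hq1 (Nat.le_add_left 1 a)
  have hleft : ∑ k ∈ Icc 1 (a + 1), qTerm q (a + 1) b 0 k / (1 - q ^ k)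
      - ∑ k ∈ Icc 1 a, qTerm q a b 0 k / (1 - q ^ k)
      = q ^ (a + 1) / (1 - q ^ (a + 1)) * ∑ k ∈ Icc 1 (a + 1), qTerm q (a + 1) b (-1) k := by
    have htop := qTerm_add_one hq (a + 1) b (-1) (a + 1)
    rw [neg_add_cancel] at htop
    rw [sum_Icc_succ_top (Nat.le_add_left 1 a), sum_Icc_succ_top (Nat.le_add_left 1 a), mul_add,
      mul_sum, add_sub_right_comm, ← sum_sub_distrib, htop]
    congr 1
    · refine sum_congr rfl fun k hk => ?_
      obtain ⟨hk1, hka⟩ := mem_Icc.mp hk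
      have := one_sub_pow_ne_zero hq1 hk1
      have hstep := qTerm_succ_left hq1 b 0 hka
      have hshift := qTerm_add_one hq (a + 1) b (-1) k
      have hpow := pow_sub_mul_pow q (show k ≤ a + 1 by omega)
      rw [neg_add_cancel] at hshift
      rw [hshift] at hstep ⊢
      field_simp
      linear_combination -hstep + qTerm q (a + 1) b (-1) k * hpow
    · field_simp
  have hright : ∑ k ∈ Icc 1 b, qTerm q b a 0 k / (1 - q ^ k)
      - ∑ k ∈ Icc 1 b, qTerm q b (a + 1) 0 k / (1 - q ^ k)
      = q ^ (a + 1) / (1 - q ^ (a + 1)) * ∑ k ∈ Icc 1 b, qTerm q b (a + 1) 0 k := by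
    rw [← sum_sub_distrib, mul_sum]
    refine sum_congr rfl fun k hk => ?_
    have := one_sub_pow_ne_zero hq1 (mem_Icc.mp hk).1
    have hstep := qTerm_succ_right hq1 b a 0 k
    field_simp
    linear_combination -hstep
  have key := one_add_sum_qTerm_add_sum_qTerm hq hq1 (a := a + 1) (b := b) (r := 0)
    (by omega) (by omega)
  rw [zero_add] at key
  simp only [bibasicSum, neg_zero]
  linear_combination hleft + hright + q ^ (a + 1) / (1 - q ^ (a + 1)) * key

lemma lambertSum_succ (q : ℂ) (a : ℕ) :
    lambertSum q (a + 1) = lambertSum q a + q ^ (a + 1) / (1 - q ^ (a + 1)) :=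
  sum_Icc_succ_top (Nat.le_add_left 1 a) _

lemma bibasicSum_zero (hq : q ≠ 0) (hq1 : ∀ j, 1 ≤ j → q ^ j ≠ 1) (a b : ℕ) :
    bibasicSum q a b 0 = lambertSum q b - lambertSum q a := by
  have hright (a : ℕ) : bibasicSum q a 0 0 = -lambertSum q a := by
    induction a with
    | zero => simp [bibasicSum, lambertSum]
    | succ a ih => rw [bibasicSum_succ_left hq hq1, ih, lambertSum_succ]; ring
  induction a with
  | zero =>
    have hswap : bibasicSum q 0 b 0 = -bibasicSum q b 0 0 := by simp [bibasicSum]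
    simp [hswap, hright, lambertSum]
  | succ a ih => rw [bibasicSum_succ_left hq hq1, ih, lambertSum_succ]; ring

lemma bibasicSum_eq (hq : q ≠ 0) (hq1 : ∀ j, 1 ≤ j → q ^ j ≠ 1) {a r : ℕ} (b : ℕ) (hr : r ≤ a) :
    bibasicSum q a b r = -r + lambertSum q b - lambertSum q a := by
  induction r with
  | zero => simp [bibasicSum_zero hq hq1]
  | succ r ih =>
    rw [Nat.cast_succ, bibasicSum_add_one hq hq1 (by omega) (by omega), ih (by omega)]
    push_cast
    ring

lemma sum_div_qPoch (hq1 : ∀ j, 1 ≤ j → q ^ j ≠ 1) (a b : ℕ) (x : ℕ → ℂ) :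
    ∑ k ∈ Icc 1 a, x k / (qPoch q q k * qPoch q q (a - k) * qPoch (q ^ k) q (b + 1))
      = 1 / (qPoch q q a * qPoch q q b)
        * ∑ k ∈ Icc 1 a, x k * binomRatio q a b k / (1 - q ^ k) := by
  rw [mul_sum]
  refine sum_congr rfl fun k hk => ?_
  obtain ⟨j, rfl⟩ : ∃ j, k = j + 1 := ⟨k - 1, by have := (mem_Icc.mp hk).1; omega⟩
  have := one_sub_pow_ne_zero hq1 (Nat.le_add_left 1 j)
  rw [mul_right_comm, qPoch_self_mul_qPoch_pow, binomRatio, add_comm (j + 1) b]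
  field_simp [qPoch_self_ne_zero hq1]

end QBibasic

open QBibasic in
/-- The `p = q`, `x → 1` case of the bibasic identity. -/
theorem stmt4 (m n r : ℕ) (hr : r ≤ m) (q : ℂ) (hq : q ≠ 0)
    (hq1 : ∀ j, 1 ≤ j → q ^ j ≠ 1) :
    ∑ k ∈ Finset.Icc 1 m,
        (-1 : ℂ) ^ k * q ^ (((k * (k + 1) / 2 : ℕ) : ℤ) - (r : ℤ) * k) /
          (qPoch q q k * qPoch q q (m - k) * qPoch (q ^ k) q (n + 1))
      - ∑ k ∈ Finset.Icc 1 n,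
          (-1 : ℂ) ^ k * q ^ (((k * (k + 1) / 2 : ℕ) : ℤ) + (r : ℤ) * k) /
            (qPoch q q k * qPoch q q (n - k) * qPoch (q ^ k) q (m + 1))
      = (1 / (qPoch q q m * qPoch q q n)) *
          (-(r : ℂ) + ∑ k ∈ Finset.Icc 1 n, q ^ k / (1 - q ^ k)
            - ∑ k ∈ Finset.Icc 1 m, q ^ k / (1 - q ^ k)) := by
  rw [sum_div_qPoch hq1, sum_div_qPoch hq1, mul_comm (qPoch q q n), ← mul_sub]
  congr 1
  have := bibasicSum_eq hq hq1 n hr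
  simp only [bibasicSum, qTerm, lambertSum, tri, neg_mul, ← sub_eq_add_neg] at this
  convert this using 3
end

section
/- For all r ≥ 0 and |q| < 1: ∑_{k=1}^{∞} (-1)^{k-1} q^{k(k+1)/2 - rk} / ((q;q)_k (1 - q^k)) = r + ∑_{k=1}^{∞} q^k / (1 - q^k). -/
/-!
Write `[n, k]` for the Gaussian binomial coefficients, defined by the `q`-Pascal rule, and
consider the truncations
`S_n(x) = ∑_{k<n} (-1)^k q^{C(k+2,2)} x^{k+1} [n, k+1] / (1 - q^{k+1})`.
Gauss's identity `∑_i (-1)^i q^{C(i,2)} x^i [m, i] = ∏_{j<m} (1 - x q^j)` yields the recursions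
`S_n(x) - S_n(x q) = 1 - ∏_{j<n} (1 - x q^{j+1})` and
`S_{n+1}(x) - S_n(x) = q^{n+1} / (1 - q^{n+1}) * (1 - ∏_{j≤n} (1 - x q^j))`.
At `x = q^{-r}` with `r ≤ n` every product contains the factor `1 - 1`, so
`S_n(q^{-r}) = r + ∑_{k<n} q^{k+1} / (1 - q^{k+1})`. Finally `[n, k] → 1 / (q;q)_k` as `n → ∞`,
and the uniform bound `‖[n, k]‖ ≤ (2 / (1 - ‖q‖))^k` is beaten by the decay of `q^{C(k+2,2)}`,
so Tannery's theorem lets `n → ∞` termwise.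
-/

open Finset Filter Topology

def qFactorial {R : Type*} [CommRing R] (q : R) (n : ℕ) : R := ∏ j ∈ range n, (1 - q ^ (j + 1))

def qBinomial {R : Type*} [CommRing R] (q : R) : ℕ → ℕ → R
  | _, 0 => 1
  | 0, _ + 1 => 0
  | n + 1, k + 1 => q ^ (k + 1) * qBinomial q n (k + 1) + qBinomial q n k

lemma choose_two_succ (n : ℕ) : (n + 1).choose 2 = n.choose 2 + n := by
  rw [Nat.choose_succ_succ', Nat.choose_one_right, add_comm]

section CommRing

variable {R : Type*} [CommRing R] (q : R)

@[simp]
lemma qFactorial_zero : qFactorial q 0 = 1 := prod_range_zero _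

lemma qFactorial_succ (n : ℕ) : qFactorial q (n + 1) = qFactorial q n * (1 - q ^ (n + 1)) :=
  prod_range_succ _ _

@[simp]
lemma qBinomial_zero_right (n : ℕ) : qBinomial q n 0 = 1 := by cases n <;> rfl

lemma qBinomial_succ_succ (n k : ℕ) :
    qBinomial q (n + 1) (k + 1) = q ^ (k + 1) * qBinomial q n (k + 1) + qBinomial q n k := rfl

lemma qBinomial_eq_zero_of_lt : ∀ {n k : ℕ}, n < k → qBinomial q n k = 0
  | 0, _ + 1, _ => rfl
  | _ + 1, _ + 1, h => by
    rw [qBinomial_succ_succ, qBinomial_eq_zero_of_lt (by omega),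
      qBinomial_eq_zero_of_lt (by omega), mul_zero, add_zero]

@[simp]
lemma qBinomial_self (n : ℕ) : qBinomial q n n = 1 := by
  induction n with
  | zero => rfl
  | succ n ih => rw [qBinomial_succ_succ, qBinomial_eq_zero_of_lt q n.lt_succ_self, ih]; ring

lemma qBinomial_add_mul_qFactorial_mul_qFactorial (m k : ℕ) :
    qBinomial q (m + k) k * qFactorial q k * qFactorial q m = qFactorial q (m + k) := by
  induction m generalizing k with
  | zero => simp
  | succ m ihm =>
    induction k with
    | zero => simp
    | succ k ihk =>
      have hm := ihm (k + 1)
      rw [show m + 1 + k = m + (k + 1) by omega] at ihk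
      rw [qFactorial_succ q k] at hm ⊢
      rw [qFactorial_succ q m] at ihk ⊢
      rw [show m + 1 + (k + 1) = m + (k + 1) + 1 by omega, qBinomial_succ_succ,
        qFactorial_succ q (m + (k + 1))]
      linear_combination (q ^ (k + 1) * (1 - q ^ (m + 1))) * hm + (1 - q ^ (k + 1)) * ihk

theorem sum_qBinomial_eq_prod (x : R) (m : ℕ) :
    ∑ i ∈ range (m + 1), (-1) ^ i * q ^ i.choose 2 * x ^ i * qBinomial q m i =
      ∏ j ∈ range m, (1 - x * q ^ j) := by
  induction m generalizing x with
  | zero => simp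
  | succ m ih =>
    set h : ℕ → R := fun i ↦ (-1) ^ i * q ^ i.choose 2 * (x * q) ^ i * qBinomial q m i
    have hstep (i : ℕ) : (-1) ^ (i + 1) * q ^ (i + 1).choose 2 * x ^ (i + 1) *
        qBinomial q (m + 1) (i + 1) = h (i + 1) - x * h i := by
      simp only [h, qBinomial_succ_succ, choose_two_succ]
      ring
    have hshift : ∑ i ∈ range (m + 1), h (i + 1) = ∑ i ∈ range (m + 1), h i - 1 := by
      have := sum_range_succ' h (m + 1)
      rw [sum_range_succ, show h (m + 1) = 0 by simp [h, qBinomial_eq_zero_of_lt],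
        show h 0 = 1 by simp [h]] at this
      linear_combination -this
    have hprod : ∏ j ∈ range m, (1 - x * q ^ (j + 1)) = ∏ j ∈ range m, (1 - x * q * q ^ j) := by
      simp only [pow_succ', mul_assoc]
    rw [sum_range_succ', prod_range_succ', hprod, ← ih (x * q),
      ← sum_congr rfl fun i _ ↦ (hstep i).symm, sum_sub_distrib, ← mul_sum, hshift]
    simp only [h, pow_zero, Nat.choose_zero_succ, qBinomial_zero_right, mul_one]
    ring

theorem sum_qBinomial_succ_eq_one_sub_prod (y : R) (n : ℕ) :
    ∑ k ∈ range n, (-1) ^ k * q ^ (k + 1).choose 2 * y ^ (k + 1) * qBinomial q n (k + 1) =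
      1 - ∏ j ∈ range n, (1 - y * q ^ j) := by
  rw [← sum_qBinomial_eq_prod, sum_range_succ']
  simp [pow_succ]

end CommRing

section Field

variable {K : Type*} [Field K] {q : K}

lemma qFactorial_ne_zero (hq : ¬IsOfFinOrder q) (n : ℕ) : qFactorial q n ≠ 0 :=
  prod_ne_zero_iff.2 fun j _ h ↦
    hq (isOfFinOrder_iff_pow_eq_one.2 ⟨j + 1, j.succ_pos, (sub_eq_zero.1 h).symm⟩)

lemma one_sub_pow_ne_zero_s8 (hq : ¬IsOfFinOrder q) (j : ℕ) : 1 - q ^ (j + 1) ≠ 0 :=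
  fun h ↦ qFactorial_ne_zero hq (j + 1) (by rw [qFactorial_succ, h, mul_zero])

lemma qBinomial_add_mul_qFactorial (hq : ¬IsOfFinOrder q) (m k : ℕ) :
    qBinomial q (m + k) k * qFactorial q k = ∏ j ∈ range k, (1 - q ^ (m + j + 1)) := by
  have hsplit : qFactorial q (m + k) = qFactorial q m * ∏ j ∈ range k, (1 - q ^ (m + j + 1)) :=
    prod_range_add _ _ _
  apply mul_left_cancel₀ (qFactorial_ne_zero hq m)
  linear_combination qBinomial_add_mul_qFactorial_mul_qFactorial q m k + hsplit

lemma qBinomial_succ_succ' (hq : ¬IsOfFinOrder q) (m k : ℕ) :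
    qBinomial q (m + k + 1) (k + 1) =
      qBinomial q (m + k) (k + 1) + q ^ m * qBinomial q (m + k) k := by
  cases m with
  | zero => simp [qBinomial_eq_zero_of_lt]
  | succ m =>
    apply mul_right_cancel₀
      (mul_ne_zero (qFactorial_ne_zero hq (k + 1)) (qFactorial_ne_zero hq (m + 1)))
    have h₁ := qBinomial_add_mul_qFactorial_mul_qFactorial q (m + 1) (k + 1)
    have h₂ := qBinomial_add_mul_qFactorial_mul_qFactorial q m (k + 1)
    have h₃ := qBinomial_add_mul_qFactorial_mul_qFactorial q (m + 1) k
    simp only [qFactorial_succ, ← add_assoc, Nat.add_right_comm m 1 k] at h₁ h₂ h₃ ⊢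
    linear_combination h₁ - (1 - q ^ (m + 1)) * h₂ - q ^ (m + 1) * (1 - q ^ (k + 1)) * h₃

lemma qBinomial_succ_mul_one_sub_pow (hq : ¬IsOfFinOrder q) (m k : ℕ) :
    qBinomial q (m + k + 1) (k + 1) * (1 - q ^ (k + 1)) =
      qBinomial q (m + k) k * (1 - q ^ (m + k + 1)) := by
  apply mul_right_cancel₀ (mul_ne_zero (qFactorial_ne_zero hq k) (qFactorial_ne_zero hq m))
  have h₁ := qBinomial_add_mul_qFactorial_mul_qFactorial q m (k + 1)
  have h₂ := qBinomial_add_mul_qFactorial_mul_qFactorial q m k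
  simp only [qFactorial_succ, ← add_assoc] at h₁
  linear_combination h₁ - (1 - q ^ (m + k + 1)) * h₂

def uchimuraSum (q x : K) (n : ℕ) : K :=
  ∑ k ∈ range n,
    (-1) ^ k * q ^ (k + 2).choose 2 * x ^ (k + 1) * qBinomial q n (k + 1) / (1 - q ^ (k + 1))

def lambertSum (q : K) (n : ℕ) : K := ∑ k ∈ range n, q ^ (k + 1) / (1 - q ^ (k + 1))

lemma uchimuraSum_sub_uchimuraSum_mul (hq : ¬IsOfFinOrder q) (x : K) (n : ℕ) :
    uchimuraSum q x n - uchimuraSum q (x * q) n = 1 - ∏ j ∈ range n, (1 - x * q ^ (j + 1)) := by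
  have hprod : ∏ j ∈ range n, (1 - x * q ^ (j + 1)) = ∏ j ∈ range n, (1 - x * q * q ^ j) := by
    simp only [pow_succ', mul_assoc]
  rw [hprod, ← sum_qBinomial_succ_eq_one_sub_prod, uchimuraSum, uchimuraSum, ← sum_sub_distrib]
  refine sum_congr rfl fun k _ ↦ ?_
  have := one_sub_pow_ne_zero_s8 hq k
  rw [choose_two_succ (k + 1)]
  field_simp
  ring

lemma uchimuraSum_succ (hq : ¬IsOfFinOrder q) (x : K) (n : ℕ) :
    uchimuraSum q x (n + 1) =
      uchimuraSum q x n +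
        q ^ (n + 1) / (1 - q ^ (n + 1)) * (1 - ∏ j ∈ range (n + 1), (1 - x * q ^ j)) := by
  have hlast : uchimuraSum q x n = ∑ k ∈ range (n + 1), (-1) ^ k * q ^ (k + 2).choose 2 *
      x ^ (k + 1) * qBinomial q n (k + 1) / (1 - q ^ (k + 1)) := by
    rw [sum_range_succ, qBinomial_eq_zero_of_lt q n.lt_succ_self]
    simp [uchimuraSum]
  rw [← sum_qBinomial_succ_eq_one_sub_prod, mul_sum, hlast, uchimuraSum, ← sum_add_distrib]
  refine sum_congr rfl fun k hk ↦ ?_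
  obtain ⟨m, rfl⟩ : ∃ m, n = m + k := ⟨n - k, by have := mem_range.1 hk; omega⟩
  have hk' := one_sub_pow_ne_zero_s8 hq k
  have hn' := one_sub_pow_ne_zero_s8 hq (m + k)
  have hpascal := qBinomial_succ_succ' hq m k
  have habsorb := qBinomial_succ_mul_one_sub_pow hq m k
  rw [choose_two_succ (k + 1)]
  field_simp
  linear_combination x ^ (k + 1) * q ^ (k + 1).choose 2 *
    (q ^ (k + 1) * (1 - q ^ (m + k + 1)) * hpascal - q ^ (m + k + 1) * habsorb)

lemma uchimuraSum_one (hq : ¬IsOfFinOrder q) (n : ℕ) : uchimuraSum q 1 n = lambertSum q n := by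
  induction n with
  | zero => simp [uchimuraSum, lambertSum]
  | succ n ih =>
    rw [uchimuraSum_succ hq, ih, lambertSum, lambertSum, sum_range_succ, prod_range_succ',
      pow_zero, one_mul, sub_self, mul_zero, sub_zero, mul_one]

lemma uchimuraSum_inv_pow (hq : ¬IsOfFinOrder q) (hq₀ : q ≠ 0) {r n : ℕ} (hrn : r ≤ n) :
    uchimuraSum q (q⁻¹ ^ r) n = r + lambertSum q n := by
  induction r with
  | zero => simp [uchimuraSum_one hq]
  | succ r ih =>
    have hshift : q⁻¹ ^ (r + 1) * q = q⁻¹ ^ r := by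
      rw [pow_succ, mul_assoc, inv_mul_cancel₀ hq₀, mul_one]
    have hvanish : ∏ j ∈ range n, (1 - q⁻¹ ^ (r + 1) * q ^ (j + 1)) = 0 :=
      prod_eq_zero (mem_range.2 (by omega : r < n))
        (by rw [inv_pow, inv_mul_cancel₀ (pow_ne_zero _ hq₀), sub_self])
    have := uchimuraSum_sub_uchimuraSum_mul hq (q⁻¹ ^ (r + 1)) n
    rw [hshift, hvanish, ih (by omega)] at this
    push_cast
    linear_combination this

end Field

lemma summable_pow_choose_two_mul_pow {E : Type*} [NormedCommRing E] [CompleteSpace E] {ρ : E}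
    (hρ : ‖ρ‖ < 1) (C : E) : Summable fun k : ℕ ↦ ρ ^ k.choose 2 * C ^ k := by
  have hratio : Tendsto (fun k : ℕ ↦ ‖ρ ^ k * C‖) atTop (𝓝 0) := by
    simpa using ((tendsto_pow_atTop_nhds_zero_of_norm_lt_one hρ).mul_const C).norm
  refine summable_of_ratio_norm_eventually_le (r := 1 / 2) (by norm_num) ?_
  filter_upwards [hratio.eventually_le_const (by norm_num : (0 : ℝ) < 1 / 2)] with k hk
  calc ‖ρ ^ (k + 1).choose 2 * C ^ (k + 1)‖ = ‖(ρ ^ k.choose 2 * C ^ k) * (ρ ^ k * C)‖ := by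
        rw [choose_two_succ]; congr 1; ring
    _ ≤ ‖ρ ^ k.choose 2 * C ^ k‖ * ‖ρ ^ k * C‖ := norm_mul_le _ _
    _ ≤ 1 / 2 * ‖ρ ^ k.choose 2 * C ^ k‖ := by rw [mul_comm]; gcongr

section NormedField

variable {𝕜 : Type*} [NormedField 𝕜] {q : 𝕜}

lemma not_isOfFinOrder_of_norm_lt_one (hq : ‖q‖ < 1) : ¬IsOfFinOrder q :=
  fun h ↦ hq.ne h.norm_eq_one

lemma one_sub_norm_le_norm_one_sub_pow (hq : ‖q‖ < 1) (j : ℕ) :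
    1 - ‖q‖ ≤ ‖1 - q ^ (j + 1)‖ :=
  calc 1 - ‖q‖ ≤ 1 - ‖q ^ (j + 1)‖ := by
        rw [norm_pow]; gcongr; exact pow_le_of_le_one (norm_nonneg q) hq.le j.succ_ne_zero
    _ ≤ ‖1 - q ^ (j + 1)‖ := by simpa using norm_sub_norm_le (1 : 𝕜) (q ^ (j + 1))

lemma norm_qBinomial_le (hq : ‖q‖ < 1) (n k : ℕ) :
    ‖qBinomial q n k‖ ≤ (2 / (1 - ‖q‖)) ^ k := by
  have hρ : 0 < 1 - ‖q‖ := by linarith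
  rcases lt_or_ge n k with hnk | hkn
  · rw [qBinomial_eq_zero_of_lt q hnk, norm_zero]; positivity
  obtain ⟨m, rfl⟩ : ∃ m, n = m + k := ⟨n - k, by omega⟩
  have hnum : ‖∏ j ∈ range k, (1 - q ^ (m + j + 1))‖ ≤ 2 ^ k := by
    have hfactor (j : ℕ) : ‖1 - q ^ (m + j + 1)‖ ≤ 2 :=
      calc ‖1 - q ^ (m + j + 1)‖ ≤ ‖(1 : 𝕜)‖ + ‖q‖ ^ (m + j + 1) :=
            (norm_sub_le _ _).trans_eq (by rw [norm_pow])
        _ ≤ 1 + 1 := by rw [norm_one]; gcongr; exact pow_le_one₀ (norm_nonneg q) hq.le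
        _ = 2 := one_add_one_eq_two
    calc ‖∏ j ∈ range k, (1 - q ^ (m + j + 1))‖ = ∏ j ∈ range k, ‖1 - q ^ (m + j + 1)‖ :=
          norm_prod _ _
      _ ≤ ∏ _j ∈ range k, (2 : ℝ) := prod_le_prod (fun _ _ ↦ norm_nonneg _) fun j _ ↦ hfactor j
      _ = 2 ^ k := by rw [prod_const, card_range]
  have hden : (1 - ‖q‖) ^ k ≤ ‖qFactorial q k‖ := by
    calc (1 - ‖q‖) ^ k = ∏ _j ∈ range k, (1 - ‖q‖) := by rw [prod_const, card_range]
      _ ≤ ∏ j ∈ range k, ‖1 - q ^ (j + 1)‖ :=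
          prod_le_prod (fun _ _ ↦ hρ.le) fun j _ ↦ one_sub_norm_le_norm_one_sub_pow hq j
      _ = ‖qFactorial q k‖ := (norm_prod _ _).symm
  rw [eq_div_of_mul_eq (qFactorial_ne_zero (not_isOfFinOrder_of_norm_lt_one hq) k)
    (qBinomial_add_mul_qFactorial (not_isOfFinOrder_of_norm_lt_one hq) m k), norm_div, div_pow]
  exact div_le_div₀ (by positivity) hnum (by positivity) hden

lemma tendsto_qBinomial_atTop (hq : ‖q‖ < 1) (k : ℕ) :
    Tendsto (fun n ↦ qBinomial q n k) atTop (𝓝 (qFactorial q k)⁻¹) := by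
  rw [← tendsto_add_atTop_iff_nat k]
  have hfactor (j : ℕ) : Tendsto (fun m : ℕ ↦ 1 - q ^ (m + j + 1)) atTop (𝓝 1) := by
    have := ((tendsto_pow_atTop_nhds_zero_of_norm_lt_one hq).mul_const (q ^ (j + 1))).const_sub 1
    simpa [← pow_add, add_assoc] using this
  have := (tendsto_finsetProd (range k) fun j _ ↦ hfactor j).mul_const (qFactorial q k)⁻¹
  rw [prod_const_one, one_mul] at this
  refine this.congr fun m ↦ ?_
  rw [← qBinomial_add_mul_qFactorial (not_isOfFinOrder_of_norm_lt_one hq),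
    mul_inv_cancel_right₀ (qFactorial_ne_zero (not_isOfFinOrder_of_norm_lt_one hq) k)]

variable [CompleteSpace 𝕜]

lemma tendsto_uchimuraSum (hq : ‖q‖ < 1) (x : 𝕜) :
    Tendsto (uchimuraSum q x) atTop
      (𝓝 (∑' k : ℕ, (-1) ^ k * q ^ (k + 2).choose 2 * x ^ (k + 1) /
        (qFactorial q (k + 1) * (1 - q ^ (k + 1))))) := by
  set u : ℕ → ℕ → 𝕜 := fun n k ↦
    (-1) ^ k * q ^ (k + 2).choose 2 * x ^ (k + 1) * qBinomial q n (k + 1) / (1 - q ^ (k + 1))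
  set D : ℝ := ‖q‖ * (‖x‖ * (2 / (1 - ‖q‖)))
  have hsum : uchimuraSum q x = fun n ↦ ∑' k, u n k := by
    funext n
    refine (tsum_eq_sum fun k hk ↦ ?_).symm
    rw [qBinomial_eq_zero_of_lt q (by simpa using hk), mul_zero, zero_div]
  have hbound (n k : ℕ) : ‖u n k‖ ≤ ‖q‖ ^ (k + 1).choose 2 * D ^ (k + 1) / (1 - ‖q‖) := by
    calc ‖u n k‖ = ‖q‖ ^ (k + 2).choose 2 * ‖x‖ ^ (k + 1) * ‖qBinomial q n (k + 1)‖ /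
          ‖1 - q ^ (k + 1)‖ := by simp [u]
      _ ≤ ‖q‖ ^ (k + 2).choose 2 * ‖x‖ ^ (k + 1) * (2 / (1 - ‖q‖)) ^ (k + 1) / (1 - ‖q‖) := by
          gcongr
          exacts [norm_qBinomial_le hq n (k + 1), one_sub_norm_le_norm_one_sub_pow hq k]
      _ = ‖q‖ ^ (k + 1).choose 2 * D ^ (k + 1) / (1 - ‖q‖) := by
          rw [choose_two_succ (k + 1)]; ring
  rw [hsum]
  refine tendsto_tsum_of_dominated_convergence ?_ (fun k ↦ ?_) (.of_forall hbound)
  · exact ((summable_nat_add_iff 1).2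
      (summable_pow_choose_two_mul_pow (by simpa using hq) D)).div_const _
  · convert ((tendsto_qBinomial_atTop hq (k + 1)).const_mul
      ((-1) ^ k * q ^ (k + 2).choose 2 * x ^ (k + 1))).div_const (1 - q ^ (k + 1)) using 2
    rw [div_mul_eq_div_div, div_eq_mul_inv _ (qFactorial q (k + 1))]

lemma summable_lambert (hq : ‖q‖ < 1) : Summable fun k : ℕ ↦ q ^ (k + 1) / (1 - q ^ (k + 1)) := by
  refine .of_norm_bounded ((summable_geometric_of_lt_one (norm_nonneg q) hq).mul_right
    (‖q‖ / (1 - ‖q‖))) fun k ↦ ?_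
  rw [norm_div, norm_pow, pow_succ, mul_div_assoc]
  gcongr
  exact one_sub_norm_le_norm_one_sub_pow hq k

theorem tsum_uchimura_inv_pow (hq₀ : q ≠ 0) (hq : ‖q‖ < 1) (r : ℕ) :
    ∑' k : ℕ, (-1) ^ k * q ^ (k + 2).choose 2 * (q⁻¹ ^ r) ^ (k + 1) /
        (qFactorial q (k + 1) * (1 - q ^ (k + 1))) =
      r + ∑' k : ℕ, q ^ (k + 1) / (1 - q ^ (k + 1)) := by
  refine tendsto_nhds_unique (tendsto_uchimuraSum hq _) ?_
  refine (((summable_lambert hq).hasSum.tendsto_sum_nat).const_add (r : 𝕜)).congr' ?_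
  filter_upwards [eventually_ge_atTop r] with n hn
  exact (uchimuraSum_inv_pow (not_isOfFinOrder_of_norm_lt_one hq) hq₀ hn).symm

end NormedField

lemma qPoch_self_eq_qFactorial (q : ℂ) (n : ℕ) : qPoch q q n = qFactorial q n :=
  prod_congr rfl fun j _ ↦ by rw [pow_succ']

/-- Generalized Kluyver–Uchimura identity. -/
theorem stmt8 (r : ℕ) (q : ℂ) (hq : q ≠ 0) (hq1 : ‖q‖ < 1) :
    ∑' k : ℕ, (-1 : ℂ) ^ k *
        q ^ ((((k + 1) * (k + 2) / 2 : ℕ) : ℤ) - (r : ℤ) * (k + 1)) /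
        (qPoch q q (k + 1) * (1 - q ^ (k + 1)))
      = (r : ℂ) + ∑' k : ℕ, q ^ (k + 1) / (1 - q ^ (k + 1)) := by
  rw [← tsum_uchimura_inv_pow hq hq1 r]
  refine tsum_congr fun k ↦ ?_
  have hchoose : (k + 1) * (k + 2) / 2 = (k + 2).choose 2 := by
    rw [Nat.choose_two_right, Nat.add_sub_assoc one_le_two, mul_comm]; rfl
  have hpow : q ^ ((((k + 1) * (k + 2) / 2 : ℕ) : ℤ) - (r : ℤ) * (k + 1)) =
      q ^ (k + 2).choose 2 * (q⁻¹ ^ r) ^ (k + 1) := by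
    rw [zpow_sub₀ hq, hchoose, zpow_natCast, ← pow_mul, inv_pow, div_eq_mul_inv,
      show (r : ℤ) * (k + 1) = ((r * (k + 1) : ℕ) : ℤ) by push_cast; rfl, zpow_natCast]
  rw [hpow, qPoch_self_eq_qFactorial, mul_assoc]
end

section
/- For m, n ≥ 1 the Dilcher identity holds: ∑_{k=1}^{n} (-1)^{k-1} [n choose k]_q q^{k(k-1)/2 + km} / (1 − q^k)^m = ∑_{1 ≤ k_1 ≤ ⋯ ≤ k_m ≤ n} q^{k_1+⋯+k_m} / ((1−q^{k_1})⋯(1−q^{k_m})), as rational functions in q. -/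
/-- The complete homogeneous symmetric function `h_m` in `q^i/(1-q^i)`, `i = 1,…,n`. -/
noncomputable def hSym (q : ℂ) (n j : ℕ) : ℂ :=
  ∑ s ∈ (Finset.Icc 1 n).sym j,
    (Multiset.map (fun i => q ^ i / (1 - q ^ i)) (s : Multiset ℕ)).prod

open Finset

section CompleteHomog

variable {ι R : Type*} [DecidableEq ι] [CommSemiring R] (t : ι → R) {s : Finset ι} {a : ι}

noncomputable def completeHomog (s : Finset ι) (m : ℕ) : R :=
  ∑ u ∈ s.sym m, ((u : Multiset ι).map t).prod

theorem completeHomog_zero (s : Finset ι) : completeHomog t s 0 = 1 := by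
  rw [completeHomog, sym_zero, sum_singleton]
  rfl

theorem completeHomog_empty_succ (m : ℕ) : completeHomog t ∅ (m + 1) = 0 := by
  rfl

theorem completeHomog_insert_succ (ha : a ∉ s) (m : ℕ) :
    completeHomog t (insert a s) (m + 1)
      = completeHomog t s (m + 1) + t a * completeHomog t (insert a s) m := by
  have hnot : ((insert a s).sym (m + 1)).filter (a ∉ ·) = s.sym (m + 1) := by
    ext u
    simp only [mem_filter, mem_sym_iff, mem_insert]
    exact ⟨fun ⟨h, hau⟩ b hb => (h b hb).resolve_left (by rintro rfl; exact hau hb),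
      fun h => ⟨fun b hb => Or.inr (h b hb), fun hau => ha (h a hau)⟩⟩
  have hmem : ((insert a s).sym (m + 1)).filter (a ∈ ·)
      = ((insert a s).sym m).image (Sym.cons a) := by
    ext u
    simp only [mem_filter, mem_sym_iff, mem_image]
    constructor
    · rintro ⟨h, hau⟩
      exact ⟨u.erase a hau, fun b hb => h b (Sym.cons_erase hau ▸ Sym.mem_cons_of_mem hb),
        Sym.cons_erase hau⟩
    · rintro ⟨v, hv, rfl⟩
      refine ⟨fun b hb => ?_, Sym.mem_cons_self a v⟩
      rcases Sym.mem_cons.mp hb with rfl | hb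
      · exact mem_insert_self b s
      · exact hv b hb
  rw [completeHomog, ← sum_filter_add_sum_filter_not _ (a ∈ ·), hmem, hnot,
    sum_image fun u _ v _ h => (Sym.cons_inj_right a u v).mp h, add_comm]
  simp only [Sym.coe_cons, Multiset.map_cons, Multiset.prod_cons, ← mul_sum]
  rfl

end CompleteHomog

theorem apply_ne_of_injOn_insert {ι β : Type*} [DecidableEq ι] {t : ι → β} {s : Finset ι}
    {a k : ι} (ht : Set.InjOn t ↑(insert a s)) (ha : a ∉ s) (hk : k ∈ s) : t k ≠ t a :=
  ht.ne (by simp [hk]) (by simp) (ne_of_mem_of_not_mem hk ha)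

section Lagrange

variable {ι K : Type*} [DecidableEq ι] [Field K] (t : ι → K) {s : Finset ι} {a k : ι}

noncomputable def lagrangeWeight (s : Finset ι) (k : ι) : K :=
  ∏ i ∈ s.erase k, t k / (t k - t i)

theorem lagrangeWeight_insert_self (ha : a ∉ s) :
    lagrangeWeight t (insert a s) a = ∏ i ∈ s, t a / (t a - t i) := by
  rw [lagrangeWeight, erase_insert ha]

theorem lagrangeWeight_insert_of_mem (ha : a ∉ s) (hk : k ∈ s) :
    lagrangeWeight t (insert a s) k = t k / (t k - t a) * lagrangeWeight t s k := by
  have hak : a ≠ k := fun h => ha (h ▸ hk)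
  rw [lagrangeWeight, lagrangeWeight, erase_insert_of_ne hak,
    prod_insert fun h => ha (mem_of_mem_erase h)]

-- The partial-fraction expansion at `y = 1 / x`, shaped so that it also holds for `s = ∅`.
theorem sum_lagrangeWeight_mul_div_sub (ht : Set.InjOn t s) {x : K} (hx : ∀ i ∈ s, t i ≠ x) :
    ∑ k ∈ s, lagrangeWeight t s k * (t k / (x - t k)) = ∏ i ∈ s, x / (x - t i) - 1 := by
  induction s using Finset.induction_on generalizing x with
  | empty => simp
  | @insert a s ha ih =>
    have ht' : Set.InjOn t s := ht.mono (by simp)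
    have hta : ∀ i ∈ s, t i ≠ t a := fun i hi => apply_ne_of_injOn_insert ht ha hi
    have hxa : x - t a ≠ 0 := sub_ne_zero.mpr (hx a (mem_insert_self a s)).symm
    have term : ∀ k ∈ s, lagrangeWeight t (insert a s) k * (t k / (x - t k))
        = x / (x - t a) * (lagrangeWeight t s k * (t k / (x - t k)))
          - t a / (x - t a) * (lagrangeWeight t s k * (t k / (t a - t k))) := by
      intro k hk
      have h1 : t k - t a ≠ 0 := sub_ne_zero.mpr (hta k hk)
      have h2 : t a - t k ≠ 0 := sub_ne_zero.mpr (hta k hk).symm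
      have h3 : x - t k ≠ 0 := sub_ne_zero.mpr (hx k (mem_insert_of_mem hk)).symm
      rw [lagrangeWeight_insert_of_mem t ha hk]
      field_simp
      ring
    rw [sum_insert ha, lagrangeWeight_insert_self t ha, sum_congr rfl term, sum_sub_distrib,
      ← mul_sum, ← mul_sum, ih ht' fun i hi => hx i (mem_insert_of_mem hi),
      ih ht' hta, prod_insert ha]
    field_simp
    ring

theorem sum_lagrangeWeight (hs : s.Nonempty) (ht : Set.InjOn t s) :
    ∑ k ∈ s, lagrangeWeight t s k = 1 := by
  obtain ⟨s, a, ha, rfl⟩ := hs.exists_cons_eq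
  rw [cons_eq_insert] at ht ⊢
  have hta : ∀ i ∈ s, t i ≠ t a := fun i hi => apply_ne_of_injOn_insert ht ha hi
  have hsum := sum_lagrangeWeight_mul_div_sub t (ht.mono (by simp)) hta
  have term : ∀ k ∈ s, lagrangeWeight t (insert a s) k
      = -(lagrangeWeight t s k * (t k / (t a - t k))) := by
    intro k hk
    rw [lagrangeWeight_insert_of_mem t ha hk, ← neg_sub (t k), div_neg]
    ring
  rw [sum_insert ha, lagrangeWeight_insert_self t ha, sum_congr rfl term, sum_neg_distrib, hsum]
  ring

theorem completeHomog_eq_sum_lagrangeWeight (m : ℕ) {s : Finset ι} (hs : s.Nonempty)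
    (ht : Set.InjOn t s) :
    completeHomog t s m = ∑ k ∈ s, lagrangeWeight t s k * t k ^ m := by
  induction m generalizing s with
  | zero => simp [completeHomog_zero, sum_lagrangeWeight t hs ht]
  | succ m ih =>
    -- in positive degree the identity also holds for `s = ∅`
    clear hs
    induction s using Finset.induction_on with
    | empty => simp [completeHomog_empty_succ]
    | @insert a s ha ihs =>
      have ht' : Set.InjOn t s := ht.mono (by simp)
      have shift : ∑ k ∈ insert a s, lagrangeWeight t (insert a s) k * t k ^ m * (t k - t a)
          = ∑ k ∈ s, lagrangeWeight t s k * t k ^ (m + 1) := by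
        rw [sum_insert ha, sub_self, mul_zero, zero_add]
        refine sum_congr rfl fun k hk => ?_
        have hka : t k - t a ≠ 0 := sub_ne_zero.mpr (apply_ne_of_injOn_insert ht ha hk)
        rw [lagrangeWeight_insert_of_mem t ha hk]
        field_simp
        ring
      rw [completeHomog_insert_succ t ha, ihs ht', ih (insert_nonempty a s) ht, ← shift,
        mul_sum, ← sum_add_distrib]
      exact sum_congr rfl fun k _ => by ring

end Lagrange

theorem pow_injective_of_pow_ne_one {M₀ : Type*} [MonoidWithZero M₀] [IsCancelMulZero M₀]
    {q : M₀} (hq : q ≠ 0) (hq1 : ∀ j, 1 ≤ j → q ^ j ≠ 1) :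
    Function.Injective (q ^ · : ℕ → M₀) := by
  intro i j hij
  wlog hlt : i < j generalizing i j
  · rcases (not_lt.mp hlt).lt_or_eq with h | h
    · exact (this hij.symm h).symm
    · exact h.symm
  refine absurd ?_ (hq1 (j - i) (by omega))
  apply mul_left_cancel₀ (pow_ne_zero i hq)
  simp only at hij
  rw [← pow_add, Nat.add_sub_cancel' hlt.le, mul_one, hij]

theorem qPoch_self_eq_prod_Ioc (q : ℂ) (n : ℕ) : qPoch q q n = ∏ i ∈ Ioc 0 n, (1 - q ^ i) := by
  induction n with
  | zero => simp [qPoch]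
  | succ n ih => rw [qPoch, prod_range_succ, ← qPoch, ih, prod_Ioc_succ_top n.zero_le, pow_succ']

noncomputable def qNode (q : ℂ) (i : ℕ) : ℂ := q ^ i / (1 - q ^ i)

section QNode

variable {q : ℂ}

theorem qNode_injOn (hq : q ≠ 0) (hq1 : ∀ j, 1 ≤ j → q ^ j ≠ 1) :
    Set.InjOn (qNode q) (Set.Ici 1) := by
  intro i hi j hj hij
  have hi' : 1 - q ^ i ≠ 0 := sub_ne_zero.mpr (hq1 i hi).symm
  have hj' : 1 - q ^ j ≠ 0 := sub_ne_zero.mpr (hq1 j hj).symm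
  rw [qNode, qNode, div_eq_div_iff hi' hj'] at hij
  exact pow_injective_of_pow_ne_one hq hq1 (by linear_combination hij)

theorem qNode_div_qNode_sub {i k : ℕ} (hi : q ^ i ≠ 1) (hk : q ^ k ≠ 1) (hik : q ^ k ≠ q ^ i) :
    qNode q k / (qNode q k - qNode q i) = q ^ k * (1 - q ^ i) / (q ^ k - q ^ i) := by
  have hi' := sub_ne_zero.mpr hi.symm
  have hk' := sub_ne_zero.mpr hk.symm
  have hik' := sub_ne_zero.mpr hik
  have hsub : qNode q k - qNode q i = (q ^ k - q ^ i) / ((1 - q ^ k) * (1 - q ^ i)) := by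
    rw [qNode, qNode]
    field_simp
    ring
  rw [hsub, qNode]
  field_simp

theorem qNode_div_qNode_sub_of_lt (hq : q ≠ 0) {i j : ℕ} (hi : q ^ i ≠ 1) (hj : q ^ j ≠ 1)
    (hij : q ^ (i + j) ≠ 1) :
    qNode q (i + j) / (qNode q (i + j) - qNode q i) = -(q ^ j * ((1 - q ^ i) / (1 - q ^ j))) := by
  have hi0 := pow_ne_zero i hq
  rw [qNode_div_qNode_sub hi hij, pow_add]
  · field_simp
    ring
  · rw [pow_add]
    exact fun h => hj ((mul_eq_left₀ hi0).mp h)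

theorem qNode_div_qNode_sub_of_gt (hq : q ≠ 0) {k j : ℕ} (hk : q ^ k ≠ 1) (hj : q ^ j ≠ 1)
    (hkj : q ^ (k + j) ≠ 1) :
    qNode q k / (qNode q k - qNode q (k + j)) = (1 - q ^ (k + j)) / (1 - q ^ j) := by
  have hk0 := pow_ne_zero k hq
  rw [qNode_div_qNode_sub hkj hk, pow_add]
  · field_simp
  · rw [pow_add]
    exact fun h => hj ((mul_eq_left₀ hk0).mp h.symm)

theorem prod_qNode_div_qNode_sub_Ico (hq : q ≠ 0) (hq1 : ∀ j, 1 ≤ j → q ^ j ≠ 1) {k : ℕ}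
    (hk : 1 ≤ k) :
    ∏ i ∈ Ico 1 k, qNode q k / (qNode q k - qNode q i)
      = (-1) ^ (k - 1) * q ^ (k * (k - 1) / 2) := by
  have factor : ∀ i ∈ Ico 1 k, qNode q k / (qNode q k - qNode q i)
      = -(q ^ (k - i) * ((1 - q ^ i) / (1 - q ^ (k - i)))) := by
    intro i hi
    rw [mem_Ico] at hi
    have hk' : k = i + (k - i) := by omega
    conv_lhs => rw [hk']
    exact qNode_div_qNode_sub_of_lt hq (hq1 i hi.1) (hq1 _ (by omega)) (hq1 _ (by omega))
  have hne : ∏ i ∈ Ico 1 k, (1 - q ^ i) ≠ 0 :=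
    prod_ne_zero_iff.mpr fun i hi => sub_ne_zero.mpr (hq1 i (mem_Ico.mp hi).1).symm
  have gauss : ∑ i ∈ Ico 1 k, i = k * (k - 1) / 2 := by
    rw [← sum_range_id, range_eq_Ico, sum_eq_sum_Ico_succ_bot hk, zero_add]
  rw [prod_congr rfl factor, prod_neg, prod_mul_distrib, prod_pow_eq_pow_sum, prod_div_distrib,
    sum_Ico_reflect (fun j => j) _ k.le_succ, prod_Ico_reflect (fun j => 1 - q ^ j) _ k.le_succ]
  simp [Nat.card_Ico, div_self hne, gauss]

theorem prod_qNode_div_qNode_sub_Ioc (hq : q ≠ 0) (hq1 : ∀ j, 1 ≤ j → q ^ j ≠ 1) {k n : ℕ}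
    (hk : 1 ≤ k) (hkn : k ≤ n) :
    ∏ i ∈ Ioc k n, qNode q k / (qNode q k - qNode q i) = qBinom q n k := by
  have factor : ∀ i ∈ Ioc k n, qNode q k / (qNode q k - qNode q i)
      = (1 - q ^ i) / (1 - q ^ (i - k)) := by
    intro i hi
    rw [mem_Ioc] at hi
    obtain ⟨j, rfl⟩ := Nat.exists_eq_add_of_le hi.1.le
    rw [Nat.add_sub_cancel_left]
    exact qNode_div_qNode_sub_of_gt hq (hq1 k hk) (hq1 _ (by omega)) (hq1 _ (by omega))
  have hk0 : qPoch q q k ≠ 0 := by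
    rw [qPoch_self_eq_prod_Ioc]
    exact prod_ne_zero_iff.mpr fun i hi => sub_ne_zero.mpr (hq1 i (mem_Ioc.mp hi).1).symm
  have top : ∏ i ∈ Ioc k n, (1 - q ^ i) = qPoch q q n / qPoch q q k := by
    rw [eq_div_iff hk0, mul_comm, qPoch_self_eq_prod_Ioc, qPoch_self_eq_prod_Ioc,
      prod_Ioc_consecutive _ k.zero_le hkn]
  have bottom : ∏ i ∈ Ioc k n, (1 - q ^ (i - k)) = qPoch q q (n - k) := by
    rw [qPoch_self_eq_prod_Ioc]
    refine prod_nbij' (· - k) (· + k) ?_ ?_ ?_ ?_ fun _ _ => rfl <;>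
      · intro i hi
        simp only [mem_Ioc] at hi ⊢
        omega
  rw [prod_congr rfl factor, prod_div_distrib, top, bottom, qBinom, div_div]

theorem lagrangeWeight_qNode (hq : q ≠ 0) (hq1 : ∀ j, 1 ≤ j → q ^ j ≠ 1) {k n : ℕ} (hk : 1 ≤ k)
    (hkn : k ≤ n) :
    lagrangeWeight (qNode q) (Icc 1 n) k
      = (-1) ^ (k - 1) * qBinom q n k * q ^ (k * (k - 1) / 2) := by
  have split : (Icc 1 n).erase k = Ico 1 k ∪ Ioc k n := by
    ext i
    simp only [mem_erase, mem_Icc, mem_union, mem_Ico, mem_Ioc]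
    omega
  have disj : Disjoint (Ico 1 k) (Ioc k n) :=
    disjoint_left.mpr fun i hi hi' => by simp only [mem_Ico, mem_Ioc] at hi hi'; omega
  rw [lagrangeWeight, split, prod_union disj, prod_qNode_div_qNode_sub_Ico hq hq1 hk,
    prod_qNode_div_qNode_sub_Ioc hq hq1 hk hkn]
  ring

end QNode

theorem stmt10_general (m n : ℕ) (hn : 1 ≤ n)
    (q : ℂ) (hq : q ≠ 0) (hq1 : ∀ j, 1 ≤ j → q ^ j ≠ 1) :
    ∑ k ∈ Finset.Icc 1 n,
        (-1 : ℂ) ^ (k - 1) * qBinom q n k * q ^ (k * (k - 1) / 2 + k * m) / (1 - q ^ k) ^ m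
      = hSym q n m := by
  have hnodes : Set.InjOn (qNode q) (Icc 1 n : Finset ℕ) :=
    (qNode_injOn hq hq1).mono fun i hi => (mem_Icc.mp hi).1
  rw [show hSym q n m = completeHomog (qNode q) (Icc 1 n) m from rfl,
    completeHomog_eq_sum_lagrangeWeight _ m (nonempty_Icc.mpr hn) hnodes]
  refine sum_congr rfl fun k hk => ?_
  rw [mem_Icc] at hk
  rw [lagrangeWeight_qNode hq hq1 hk.1 hk.2, qNode, pow_add, div_pow, ← pow_mul]
  ring

/-- Dilcher's identity. -/
theorem stmt10 (m n : ℕ) (hm : 1 ≤ m) (hn : 1 ≤ n)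
    (q : ℂ) (hq : q ≠ 0) (hq1 : ∀ j, 1 ≤ j → q ^ j ≠ 1) :
    ∑ k ∈ Finset.Icc 1 n,
        (-1 : ℂ) ^ (k - 1) * qBinom q n k * q ^ (k * (k - 1) / 2 + k * m) / (1 - q ^ k) ^ m
      = hSym q n m :=
  stmt10_general m n hn q hq hq1
end

section
/- Agarwal's identity: for |q| < 1 and |x|, |t| < 1, ∑_{n=0}^∞ t^n / (1 − x q^n) = ∑_{n=0}^∞ (1 − x t q^{2n}) x^n t^n q^{n^2} / ((1 − x q^n)(1 − t q^n)). -/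
/-!
Both sides are sums of the absolutely convergent double series `∑ x^m t^n q^(mn)` over `ℕ × ℕ`.
Summing each column `{(m, n) | m ∈ ℕ}` is a geometric series in `x q^n` and gives the left side.
Summing instead over the hooks `{(n + k, n)} ∪ {(n, n + k + 1)}` gives two geometric series, in
`x q^n` and `t q^n`, whose sum `x^n t^n q^(n²) (1 / (1 - x q^n) + t q^n / (1 - t q^n))` is the
`n`-th term of the right side.
-/

def Nat.hookEquiv : ℕ × (ℕ ⊕ ℕ) ≃ ℕ × ℕ where
  toFun
    | (n, .inl k) => (n + k, n)
    | (n, .inr k) => (n, n + k + 1)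
  invFun p := if p.2 ≤ p.1 then (p.2, .inl (p.1 - p.2)) else (p.1, .inr (p.2 - p.1 - 1))
  left_inv := by
    rintro ⟨n, k | k⟩
    · simp
    · simp only [show ¬n + k + 1 ≤ n by omega, if_false, Prod.mk.injEq, Sum.inr.injEq, true_and]
      omega
  right_inv := by
    rintro ⟨m, n⟩
    by_cases h : n ≤ m
    · simp [h]
    · simp only [h, if_false, Prod.mk.injEq, true_and]
      omega

section ProdNat

variable {α : Type*} [AddCommMonoid α] [TopologicalSpace α] [ContinuousAdd α] [RegularSpace α]
  {f : ℕ × ℕ → α} {s : α}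

theorem HasSum.prod_hookwise {a b : ℕ → α} (hf : HasSum f s)
    (ha : ∀ n, HasSum (fun k => f (n + k, n)) (a n))
    (hb : ∀ n, HasSum (fun k => f (n, n + k + 1)) (b n)) :
    HasSum (fun n => a n + b n) s :=
  (Nat.hookEquiv.hasSum_iff.mpr hf).prod_fiberwise fun n => (ha n).sum (hb n)

theorem HasSum.prod_fiberwise_swap {c : ℕ → α} (hf : HasSum f s)
    (hc : ∀ n, HasSum (fun m => f (m, n)) (c n)) : HasSum c s :=
  ((Equiv.prodComm ℕ ℕ).hasSum_iff.mpr hf).prod_fiberwise hc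

end ProdNat

section NormedField

variable {K : Type*} [NormedField K]

theorem norm_mul_pow_lt_one {a q : K} (hq : ‖q‖ ≤ 1) (ha : ‖a‖ < 1) (n : ℕ) :
    ‖a * q ^ n‖ < 1 := by
  rw [norm_mul, norm_pow]
  exact (mul_le_of_le_one_right (norm_nonneg a) (pow_le_one₀ (norm_nonneg q) hq)).trans_lt ha

theorem one_sub_ne_zero_of_norm_lt_one {a : K} (ha : ‖a‖ < 1) : 1 - a ≠ 0 := by
  rw [sub_ne_zero]
  rintro rfl
  simp at ha

theorem hasSum_mul_geometric_of_norm_lt_one (c : K) {z : K} (hz : ‖z‖ < 1) :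
    HasSum (fun k => c * z ^ k) (c / (1 - z)) := by
  simpa only [div_eq_mul_inv] using (hasSum_geometric_of_norm_lt_one hz).mul_left c

def agarwalSummand (x t q : K) (p : ℕ × ℕ) : K := x ^ p.1 * t ^ p.2 * q ^ (p.1 * p.2)

variable {x t q : K}

theorem summable_agarwalSummand [CompleteSpace K] (hx : ‖x‖ < 1) (ht : ‖t‖ < 1)
    (hq : ‖q‖ ≤ 1) : Summable (agarwalSummand x t q) := by
  refine Summable.of_norm_bounded
    ((summable_geometric_of_lt_one (norm_nonneg x) hx).mul_of_nonneg
      (summable_geometric_of_lt_one (norm_nonneg t) ht) (fun _ => by positivity)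
      fun _ => by positivity) fun p => ?_
  simp only [agarwalSummand, norm_mul, norm_pow]
  exact mul_le_of_le_one_right (by positivity) (pow_le_one₀ (norm_nonneg q) hq)

theorem hasSum_agarwalSummand_column (hx : ‖x‖ < 1) (hq : ‖q‖ ≤ 1) (n : ℕ) :
    HasSum (fun m => agarwalSummand x t q (m, n)) (t ^ n / (1 - x * q ^ n)) :=
  (hasSum_mul_geometric_of_norm_lt_one _ (norm_mul_pow_lt_one hq hx n)).congr_fun fun m => by
    simp only [agarwalSummand, mul_pow, ← pow_mul]
    ring

theorem hasSum_agarwalSummand_hook_fst (hx : ‖x‖ < 1) (hq : ‖q‖ ≤ 1) (n : ℕ) :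
    HasSum (fun k => agarwalSummand x t q (n + k, n))
      (x ^ n * t ^ n * q ^ (n ^ 2) / (1 - x * q ^ n)) :=
  (hasSum_mul_geometric_of_norm_lt_one _ (norm_mul_pow_lt_one hq hx n)).congr_fun fun k => by
    simp only [agarwalSummand, mul_pow, ← pow_mul]
    ring

theorem hasSum_agarwalSummand_hook_snd (ht : ‖t‖ < 1) (hq : ‖q‖ ≤ 1) (n : ℕ) :
    HasSum (fun k => agarwalSummand x t q (n, n + k + 1))
      (x ^ n * t ^ n * q ^ (n ^ 2) * (t * q ^ n) / (1 - t * q ^ n)) :=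
  (hasSum_mul_geometric_of_norm_lt_one _ (norm_mul_pow_lt_one hq ht n)).congr_fun fun k => by
    simp only [agarwalSummand, mul_pow, ← pow_mul]
    ring

end NormedField

theorem div_one_sub_add_mul_div_one_sub {K : Type*} [Field K] {u v : K} (hu : 1 - u ≠ 0)
    (hv : 1 - v ≠ 0) (c : K) :
    c / (1 - u) + c * v / (1 - v) = (1 - u * v) * c / ((1 - u) * (1 - v)) := by
  field_simp
  ring

theorem stmt15_general (q x t : ℂ) (hq : ‖q‖ < 1) (hx : ‖x‖ < 1) (ht : ‖t‖ < 1) :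
    ∑' n : ℕ, t ^ n / (1 - x * q ^ n)
      = ∑' n : ℕ, (1 - x * t * q ^ (2 * n)) * x ^ n * t ^ n * q ^ (n ^ 2) /
          ((1 - x * q ^ n) * (1 - t * q ^ n)) := by
  have hs := (summable_agarwalSummand hx ht hq.le).hasSum
  rw [(hs.prod_fiberwise_swap (hasSum_agarwalSummand_column hx hq.le)).tsum_eq,
    ← (hs.prod_hookwise (hasSum_agarwalSummand_hook_fst hx hq.le)
      (hasSum_agarwalSummand_hook_snd ht hq.le)).tsum_eq]
  congr 1 with n
  rw [div_one_sub_add_mul_div_one_sub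
    (one_sub_ne_zero_of_norm_lt_one (norm_mul_pow_lt_one hq.le hx n))
    (one_sub_ne_zero_of_norm_lt_one (norm_mul_pow_lt_one hq.le ht n))]
  ring

/-- Agarwal's identity. -/
theorem stmt15 (q x t : ℂ) (hq : ‖q‖ < 1) (hx : ‖x‖ < 1) (ht : ‖t‖ < 1)
    (hx1 : ∀ n : ℕ, x * q ^ n ≠ 1) (ht1 : ∀ n : ℕ, t * q ^ n ≠ 1) :
    ∑' n : ℕ, t ^ n / (1 - x * q ^ n)
      = ∑' n : ℕ, (1 - x * t * q ^ (2 * n)) * x ^ n * t ^ n * q ^ (n ^ 2) /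
          ((1 - x * q ^ n) * (1 - t * q ^ n)) :=
  stmt15_general q x t hq hx ht
end
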